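/- arXiv:2508.03577 — 8 statements merged into one kernel-verified Lean document; each statement's English description precedes it below -/
import Mathlib

section
/- For every j ∈ {0,…,M}, one has Σ_{k=0}^{M} π_k·Q(k,j) = 0; that is, the vector π = (π_0,…,π_M) given by the explicit Gamma-function formula satisfies the stationarity equation πQ = 0 for the rate matrix Q of the single-column chain. -/
/-- **Stationarity of the explicit invariant distribution of the single-column chain.**
Fix `M ≥ 1`, `α > 0`, `p, q ∈ (0,1)` with `p + q = 1`, and set `β = pM/(αq)`.
`Q` is the rate matrix on `{0,…,M}` with `Q(k,k+1) = αq(1 − k/M)`, `Q(k,0) = p` for `k ≥ 1`,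
all other off-diagonal entries `0`, and diagonal entries `Q(k,k) = −∑_{j≠k} Q(k,j)`.
With `π_k = [Γ(M+1)/Γ(M+1−k)]·[Γ(β+M−k)/Γ(β+M)]·p/(p+αq)`, one has
`∑_{k=0}^M π_k · Q(k,j) = 0` for every `j ∈ {0,…,M}`. -/
theorem stationarity_single_column
    (M : ℕ) (hM : 1 ≤ M) (α p q : ℝ) (hα : 0 < α)
    (hp : p ∈ Set.Ioo (0 : ℝ) 1) (hq : q ∈ Set.Ioo (0 : ℝ) 1) (hpq : p + q = 1)
    (β : ℝ) (hβ : β = p * M / (α * q))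
    (Q : ℕ → ℕ → ℝ)
    (hQoff : ∀ k ≤ M, ∀ j ≤ M, j ≠ k →
      Q k j = if j = k + 1 then α * q * (1 - (k : ℝ) / M) else if j = 0 then p else 0)
    (hQdiag : ∀ k ≤ M, Q k k = -(∑ j ∈ (Finset.range (M + 1)).erase k, Q k j))
    (π : ℕ → ℝ)
    (hπ : ∀ k ≤ M, π k =
      (Real.Gamma (M + 1) / Real.Gamma ((M : ℝ) + 1 - k)) *
        (Real.Gamma (β + M - k) / Real.Gamma (β + M)) * (p / (p + α * q))) :
    ∀ j ≤ M, ∑ k ∈ Finset.range (M + 1), π k * Q k j = 0 := by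
  have hM0 : (0:ℝ) < M := by exact_mod_cast Nat.lt_of_lt_of_le Nat.zero_lt_one hM
  have hq0 := hq.1
  have hp0 := hp.1
  have hβ0 : 0 < β := by rw [hβ]; positivity
  have hpβ : p = α * q * β / M := by
    rw [hβ]; field_simp
  -- key ratio identity
  have L1 : ∀ k < M, π (k+1) * (β + M - 1 - k) = π k * ((M:ℝ) - k) := by
    intro k hk
    have hkM : (k:ℝ) + 1 ≤ (M:ℝ) := by exact_mod_cast hk
    have hMk : (0:ℝ) < (M:ℝ) - k := by linarith
    have hb : (0:ℝ) < β + M - k - 1 := by linarith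
    rw [hπ (k+1) hk, hπ k (le_of_lt hk)]
    push_cast
    have e1 : Real.Gamma ((M:ℝ) + 1 - k) = ((M:ℝ) - k) * Real.Gamma ((M:ℝ) - k) := by
      rw [show (M:ℝ) + 1 - k = ((M:ℝ) - k) + 1 by ring, Real.Gamma_add_one hMk.ne']
    have e2 : Real.Gamma (β + M - k) = (β + (M:ℝ) - k - 1) * Real.Gamma (β + M - k - 1) := by
      have h2 := Real.Gamma_add_one hb.ne'
      rw [show β + (M:ℝ) - k - 1 + 1 = β + M - k by ring] at h2
      exact h2
    have e3 : (M:ℝ) + 1 - ((k:ℝ) + 1) = (M:ℝ) - k := by ring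
    have e4 : β + (M:ℝ) - ((k:ℝ) + 1) = β + M - k - 1 := by ring
    rw [e3, e4, e1, e2]
    have hB : Real.Gamma ((M:ℝ) - k) ≠ 0 := (Real.Gamma_pos_of_pos hMk).ne'
    have hD : Real.Gamma (β + M) ≠ 0 := (Real.Gamma_pos_of_pos (by linarith)).ne'
    field_simp
    ring
  -- local balance
  have L2 : ∀ k < M, π k * (α * q * (1 - (k:ℝ)/M)) =
      π (k+1) * (α * q * (1 - ((k:ℝ)+1)/M) + p) := by
    intro k hk
    have h := L1 k hk
    have hc : α * q * (1 - ((k:ℝ)+1)/M) + p = (α*q/M) * (β + M - 1 - k) := by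
      rw [hpβ]; field_simp; ring
    rw [hc, show (1:ℝ) - (k:ℝ)/M = ((M:ℝ)-(k:ℝ))/M by field_simp]
    linear_combination (-(α * q) / (M:ℝ)) * h
  intro j hj
  rcases Nat.eq_zero_or_pos j with rfl | hj1
  · -- column 0
    have hQ00 : Q 0 0 = -(α*q) := by
      rw [hQdiag 0 (Nat.zero_le M)]
      congr 1
      rw [Finset.sum_eq_single_of_mem 1
        (by simp [Finset.mem_erase, Finset.mem_range]; omega)]
      · rw [hQoff 0 (Nat.zero_le M) 1 hM (by omega)]
        norm_num
      · intro i hi hi1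
        simp only [Finset.mem_erase, Finset.mem_range] at hi
        rw [hQoff 0 (Nat.zero_le M) i (by omega) hi.1]
        rw [if_neg (by omega), if_neg hi.1]
    have hQk0 : ∀ i < M, Q (i+1) 0 = p := by
      intro i hi
      rw [hQoff (i+1) (by omega) 0 (Nat.zero_le M) (by omega)]
      rw [if_neg (by omega), if_pos rfl]
    rw [Finset.sum_range_succ']
    have hsum : ∑ i ∈ Finset.range M, π (i+1) * Q (i+1) 0
        = ∑ i ∈ Finset.range M, ((fun n => π n * (α*q*(1-(n:ℝ)/M))) i
            - (fun n => π n * (α*q*(1-(n:ℝ)/M))) (i+1)) := by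
      apply Finset.sum_congr rfl
      intro i hi
      simp only [Finset.mem_range] at hi
      rw [hQk0 i hi]
      have h := L2 i hi
      push_cast
      linear_combination -h
    rw [hsum, Finset.sum_range_sub']
    rw [hQ00]
    push_cast
    field_simp
    ring
  · -- column j = k+1 ≥ 1
    obtain ⟨k, rfl⟩ : ∃ k, j = k + 1 := ⟨j-1, by omega⟩
    have hkM : k < M := by omega
    have hsub : ({k, k+1} : Finset ℕ) ⊆ Finset.range (M+1) := by
      intro i hi
      simp only [Finset.mem_insert, Finset.mem_singleton] at hi
      rcases hi with rfl|rfl <;> simp only [Finset.mem_range] <;> omega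
    have hzero : ∀ i ∈ Finset.range (M+1), i ∉ ({k, k+1} : Finset ℕ) →
        π i * Q i (k+1) = 0 := by
      intro i hi hni
      simp only [Finset.mem_insert, Finset.mem_singleton, not_or] at hni
      simp only [Finset.mem_range] at hi
      rw [hQoff i (by omega) (k+1) (by omega) (by omega)]
      rw [if_neg (by omega), if_neg (by omega)]
      ring
    rw [← Finset.sum_subset hsub hzero]
    rw [Finset.sum_insert (by simp), Finset.sum_singleton]
    have hQk : Q k (k+1) = α*q*(1-(k:ℝ)/M) := by
      rw [hQoff k (by omega) (k+1) (by omega) (by omega), if_pos rfl]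
    have hQd : Q (k+1) (k+1) = -(α*q*(1-((k:ℝ)+1)/M) + p) := by
      rw [hQdiag (k+1) (by omega)]
      rcases Nat.lt_or_ge (k+1) M with hlt | hge
      · have hS : ∑ i ∈ (Finset.range (M+1)).erase (k+1), Q (k+1) i
            = ∑ i ∈ ({0, k+2} : Finset ℕ), Q (k+1) i := by
          symm
          apply Finset.sum_subset
          · intro i hi
            simp only [Finset.mem_insert, Finset.mem_singleton] at hi
            rcases hi with rfl|rfl <;>
              simp only [Finset.mem_erase, Finset.mem_range] <;> omega
          · intro i hi hni
            simp only [Finset.mem_erase, Finset.mem_range] at hi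
            simp only [Finset.mem_insert, Finset.mem_singleton, not_or] at hni
            rw [hQoff (k+1) (by omega) i (by omega) hi.1]
            rw [if_neg (by omega), if_neg (by omega)]
        rw [hS, Finset.sum_insert (by simp), Finset.sum_singleton]
        rw [hQoff (k+1) (by omega) 0 (by omega) (by omega),
            hQoff (k+1) (by omega) (k+2) (by omega) (by omega)]
        rw [if_neg (by omega), if_pos rfl, if_pos rfl]
        push_cast
        ring
      · have hkM1 : k + 1 = M := by omega
        have hS : ∑ i ∈ (Finset.range (M+1)).erase (k+1), Q (k+1) i = Q (k+1) 0 := by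
          apply Finset.sum_eq_single_of_mem
          · simp only [Finset.mem_erase, Finset.mem_range]; omega
          · intro i hi hi0
            simp only [Finset.mem_erase, Finset.mem_range] at hi
            rw [hQoff (k+1) (by omega) i (by omega) hi.1]
            rw [if_neg (by omega), if_neg hi0]
        rw [hS, hQoff (k+1) (by omega) 0 (by omega) (by omega)]
        rw [if_neg (by omega), if_pos rfl]
        have hc : ((k:ℝ)+1)/M = 1 := by
          rw [show ((k:ℝ)+1) = (M:ℝ) by exact_mod_cast congrArg Nat.cast hkM1]
          exact div_self hM0.ne'
        rw [hc]; ring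
    rw [hQk, hQd]
    linear_combination L2 k hkM
end

section
/- The vector π is a probability vector: π_k ≥ 0 for all 0 ≤ k ≤ M and Σ_{k=0}^{M} π_k = 1. Equivalently, Σ_{k=0}^{M} [Γ(M+1)/Γ(M+1−k)]·[Γ(β+M−k)/Γ(β+M)] = (β+M)/β. -/
lemma my_gamma_add_nat (x : ℝ) (hx : 0 < x) (n : ℕ) :
    Real.Gamma (x + n) = (∏ i ∈ Finset.range n, (x + i)) * Real.Gamma x := by
  induction n with
  | zero => simp
  | succ n ih =>
      have hxn : x + n ≠ 0 := by positivity
      have : Real.Gamma (x + (n+1)) = (x + n) * Real.Gamma (x + n) := by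
        have := Real.Gamma_add_one hxn
        rw [show x + ((n:ℝ)+1) = x + n + 1 by ring, this]
      push_cast
      rw [this, ih, Finset.prod_range_succ]
      ring

lemma my_key (b : ℝ) (hb : 0 < b) (n : ℕ) :
    ∑ k ∈ Finset.range (n+1), ∏ i ∈ Finset.range k,
      (((n:ℝ) + 1 - k + i) / (b + n - k + i)) = (b + n) / b := by
  induction n with
  | zero => simp [hb.ne']
  | succ n ih =>
      have hbn : b + (n:ℝ) ≠ 0 := by positivity
      rw [Finset.sum_range_succ']
      have h1 : ∀ k ∈ Finset.range (n+1),
          (∏ i ∈ Finset.range (k+1),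
            ((((n:ℕ)+1:ℕ):ℝ) + 1 - ((k+1:ℕ):ℝ) + i) / (b + ((n+1:ℕ):ℝ) - ((k+1:ℕ):ℝ) + i))
          = (∏ i ∈ Finset.range k, (((n:ℝ) + 1 - k + i) / (b + n - k + i)))
              * (((n:ℝ)+1)/(b+n)) := by
        intro k hk
        rw [Finset.prod_range_succ]
        congr 1
        · apply Finset.prod_congr rfl
          intro i hi
          push_cast
          ring_nf
        · push_cast
          ring_nf
      rw [Finset.sum_congr rfl h1, ← Finset.sum_mul, ih]
      push_cast
      field_simp
      ring

/-- **The explicit stationary vector is a probability vector.**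
Fix `M ≥ 1`, `α > 0`, `p, q ∈ (0,1)` with `p + q = 1`, and set `β = pM/(αq)`.
With `π_k = [Γ(M+1)/Γ(M+1−k)]·[Γ(β+M−k)/Γ(β+M)]·p/(p+αq)` for `0 ≤ k ≤ M`, one has
`π_k ≥ 0` for all `k` and `∑_{k=0}^M π_k = 1`; equivalently,
`∑_{k=0}^M [Γ(M+1)/Γ(M+1−k)]·[Γ(β+M−k)/Γ(β+M)] = (β+M)/β`. -/
theorem invariant_vector_is_probability_vector
    (M : ℕ) (hM : 1 ≤ M) (α p q : ℝ) (hα : 0 < α)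
    (hp : p ∈ Set.Ioo (0 : ℝ) 1) (hq : q ∈ Set.Ioo (0 : ℝ) 1) (hpq : p + q = 1)
    (β : ℝ) (hβ : β = p * M / (α * q))
    (π : ℕ → ℝ)
    (hπ : ∀ k ≤ M, π k =
      (Real.Gamma (M + 1) / Real.Gamma ((M : ℝ) + 1 - k)) *
        (Real.Gamma (β + M - k) / Real.Gamma (β + M)) * (p / (p + α * q))) :
    (∀ k ≤ M, 0 ≤ π k) ∧
      (∑ k ∈ Finset.range (M + 1), π k = 1) ∧
      (∑ k ∈ Finset.range (M + 1),
          (Real.Gamma (M + 1) / Real.Gamma ((M : ℝ) + 1 - k)) *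
            (Real.Gamma (β + M - k) / Real.Gamma (β + M)) = (β + M) / β) := by
  obtain ⟨hp0, hp1⟩ := hp
  obtain ⟨hq0, hq1⟩ := hq
  have hM0 : (0:ℝ) < M := by exact_mod_cast hM
  have hβ0 : 0 < β := by rw [hβ]; positivity
  have hden : 0 < p + α * q := by positivity
  -- each Gamma-ratio term is an explicit finite product
  have hterm : ∀ k ≤ M,
      (Real.Gamma (M + 1) / Real.Gamma ((M : ℝ) + 1 - k)) *
        (Real.Gamma (β + M - k) / Real.Gamma (β + M)) =
      ∏ i ∈ Finset.range k, (((M:ℝ) + 1 - k + i) / (β + M - k + i)) := by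
    intro k hk
    have hk' : (k:ℝ) ≤ M := by exact_mod_cast hk
    have hx1 : (0:ℝ) < (M:ℝ) + 1 - k := by linarith
    have hx2 : (0:ℝ) < β + M - k := by linarith
    have e1 : Real.Gamma ((M:ℝ) + 1)
        = (∏ i ∈ Finset.range k, ((M:ℝ)+1-k+i)) * Real.Gamma ((M:ℝ)+1-k) := by
      have h := my_gamma_add_nat ((M:ℝ)+1-k) hx1 k
      rwa [show (M:ℝ)+1-(k:ℝ)+(k:ℝ) = (M:ℝ)+1 by ring] at h
    have e2 : Real.Gamma (β + M)
        = (∏ i ∈ Finset.range k, (β+M-k+i)) * Real.Gamma (β+M-k) := by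
      have h := my_gamma_add_nat (β+M-(k:ℝ)) hx2 k
      rwa [show β+(M:ℝ)-(k:ℝ)+(k:ℝ) = β+(M:ℝ) by ring] at h
    have hG1 : Real.Gamma ((M:ℝ)+1-k) ≠ 0 := (Real.Gamma_pos_of_pos hx1).ne'
    have hG2 : Real.Gamma (β+M-k) ≠ 0 := (Real.Gamma_pos_of_pos hx2).ne'
    have hB : (0:ℝ) < ∏ i ∈ Finset.range k, (β+M-k+i) := by
      apply Finset.prod_pos; intro i hi
      have : (0:ℝ) ≤ i := Nat.cast_nonneg i
      linarith
    rw [e1, e2, Finset.prod_div_distrib]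
    field_simp
  have hsum3 : ∑ k ∈ Finset.range (M + 1),
      (Real.Gamma (M + 1) / Real.Gamma ((M : ℝ) + 1 - k)) *
        (Real.Gamma (β + M - k) / Real.Gamma (β + M)) = (β + M) / β := by
    rw [Finset.sum_congr rfl
      (fun k hk => hterm k (Finset.mem_range_succ_iff.mp hk))]
    exact my_key β hβ0 M
  refine ⟨?_, ?_, hsum3⟩
  · intro k hk
    have hk' : (k:ℝ) ≤ M := by exact_mod_cast hk
    have hx1 : (0:ℝ) < (M:ℝ) + 1 - k := by linarith
    have hx2 : (0:ℝ) < β + M - k := by linarith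
    have g1 := Real.Gamma_pos_of_pos (show (0:ℝ) < (M:ℝ)+1 by positivity)
    have g2 := Real.Gamma_pos_of_pos hx1
    have g3 := Real.Gamma_pos_of_pos hx2
    have g4 := Real.Gamma_pos_of_pos (show (0:ℝ) < β+(M:ℝ) by positivity)
    rw [hπ k hk]
    have : (0:ℝ) < Real.Gamma (M + 1) := by push_cast; exact g1
    exact le_of_lt (mul_pos (mul_pos (div_pos this g2) (div_pos g3 g4))
      (div_pos hp0 hden))
  · have h : ∑ k ∈ Finset.range (M+1), π k
        = (∑ k ∈ Finset.range (M + 1),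
            (Real.Gamma (M + 1) / Real.Gamma ((M : ℝ) + 1 - k)) *
              (Real.Gamma (β + M - k) / Real.Gamma (β + M))) * (p / (p + α * q)) := by
      rw [Finset.sum_mul]
      exact Finset.sum_congr rfl
        (fun k hk => hπ k (Finset.mem_range_succ_iff.mp hk))
    rw [h, hsum3, hβ]
    field_simp
end

section
/- One has π_{M−k}/π_M = Γ(β+k)/(Γ(k+1)·Γ(β)) for all 0 ≤ k ≤ M, and there exists a constant C > 0, depending only on β, such that for every M ≥ 1 and every integer 1 ≤ k ≤ M, C^{−1}·k^{β−1} ≤ π_{M−k}/π_M ≤ C·k^{β−1}. In particular, under the stationary distribution, the probability of seeing k zeros relative to seeing no zeros is of order k^{β−1}. -/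
open Filter


open Finset

lemma myGamma_add_nat {β : ℝ} (hβ : 0 < β) (n : ℕ) :
    Real.Gamma (β + n) = Real.Gamma β * ∏ j ∈ Finset.range n, (β + j) := by
  induction n with
  | zero => simp
  | succ n ih =>
    have h1 : (0:ℝ) < β + n := by positivity
    have h2 : (β + ((n:ℕ)+1:ℕ) : ℝ) = (β + n) + 1 := by push_cast; ring
    rw [h2, Real.Gamma_add_one h1.ne', ih, Finset.prod_range_succ]
    push_cast
    ring

lemma bound_of_tendsto {f : ℕ → ℝ} {L : ℝ} (hL : 0 < L)
    (hpos : ∀ k, 1 ≤ k → 0 < f k) (h : Filter.Tendsto f atTop (nhds L)) :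
    ∃ C : ℝ, 0 < C ∧ ∀ k, 1 ≤ k → C⁻¹ ≤ f k ∧ f k ≤ C := by
  have hev : ∀ᶠ k in atTop, f k ∈ Set.Ioo (L/2) (2*L) :=
    h.eventually (Ioo_mem_nhds (by linarith) (by linarith))
  obtain ⟨N, hN⟩ := eventually_atTop.mp hev
  set S := Finset.Icc 1 N with hS
  set C := max (max (2*L) (2/L)) (∑ k ∈ S, (f k + (f k)⁻¹)) with hC
  have hsum_nonneg : ∀ k ∈ S, 0 ≤ f k + (f k)⁻¹ := by
    intro k hk
    have := hpos k (Finset.mem_Icc.mp hk).1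
    positivity
  have hCpos : 0 < C := lt_of_lt_of_le (by positivity : (0:ℝ) < 2*L)
      (le_trans (le_max_left _ _) (le_max_left _ _))
  refine ⟨C, hCpos, fun k hk => ?_⟩
  have hfk := hpos k hk
  by_cases hkN : N ≤ k
  · have hio := hN k hkN
    constructor
    · have h1 : (2/L) ≤ C := le_trans (le_max_right _ _) (le_max_left _ _)
      have h2 : C⁻¹ ≤ (2/L)⁻¹ := inv_anti₀ (by positivity) h1
      have h3 : (2/L)⁻¹ = L/2 := by field_simp
      linarith [hio.1]
    · exact le_trans hio.2.le (le_trans (le_max_left _ _) (le_max_left _ _))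
  · have hkS : k ∈ S := Finset.mem_Icc.mpr ⟨hk, le_of_not_ge hkN⟩
    have hle : f k + (f k)⁻¹ ≤ ∑ j ∈ S, (f j + (f j)⁻¹) :=
      Finset.single_le_sum hsum_nonneg hkS
    have hfinv : 0 < (f k)⁻¹ := by positivity
    constructor
    · have h1 : (f k)⁻¹ ≤ C := le_trans (by linarith) (le_max_right _ _)
      calc C⁻¹ ≤ ((f k)⁻¹)⁻¹ := inv_anti₀ hfinv h1
        _ = f k := inv_inv _
    · exact le_trans (by linarith) (le_max_right _ _)

lemma gamma_ratio_tendsto {β : ℝ} (hβ : 0 < β) :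
    Filter.Tendsto
      (fun k : ℕ => Real.Gamma (β + k) / (Real.Gamma ((k:ℝ) + 1) * Real.Gamma β * (k:ℝ) ^ (β - 1)))
      atTop (nhds (Real.Gamma β)⁻¹) := by
  have hΓβ : 0 < Real.Gamma β := Real.Gamma_pos_of_pos hβ
  have key : ∀ k : ℕ, 1 ≤ k →
      Real.Gamma (β + k) / (Real.Gamma ((k:ℝ) + 1) * Real.Gamma β * (k:ℝ) ^ (β - 1))
        = ((k:ℝ) / ((k:ℝ) + β)) * (Real.GammaSeq β k)⁻¹ := by
    intro k hk
    have hk0 : (0:ℝ) < k := by exact_mod_cast hk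
    have hbk : (0:ℝ) < β + k := by positivity
    have hP : (0:ℝ) < ∏ j ∈ Finset.range k, (β + j) := by
      apply Finset.prod_pos; intro j _; positivity
    have hGk : Real.Gamma ((k:ℝ) + 1) = (Nat.factorial k : ℝ) := by
      exact_mod_cast Real.Gamma_nat_eq_factorial k
    have hrpow : (k:ℝ) ^ β = (k:ℝ) ^ (β - 1) * k := by
      have h := Real.rpow_add hk0 (β - 1) 1
      rw [Real.rpow_one] at h
      rw [show β - 1 + 1 = β by ring] at h
      exact h
    have hGbk : Real.Gamma (β + k) = Real.Gamma β * ∏ j ∈ Finset.range k, (β + j) :=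
      myGamma_add_nat hβ k
    have hseq : Real.GammaSeq β k
        = (k:ℝ) ^ β * (Nat.factorial k) / ((∏ j ∈ Finset.range k, (β + j)) * (β + k)) := by
      rw [Real.GammaSeq, Finset.prod_range_succ]
    have hrp : (0:ℝ) < (k:ℝ) ^ (β - 1) := Real.rpow_pos_of_pos hk0 _
    have hfac : (0:ℝ) < (Nat.factorial k : ℝ) := by exact_mod_cast k.factorial_pos
    rw [hGbk, hGk, hseq, hrpow]
    field_simp
    ring
  have h1 : Filter.Tendsto (fun k : ℕ => (k:ℝ) / ((k:ℝ) + β)) atTop (nhds 1) :=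
    tendsto_natCast_div_add_atTop β
  have h2 : Filter.Tendsto (fun k : ℕ => (Real.GammaSeq β k)⁻¹) atTop
      (nhds (Real.Gamma β)⁻¹) := (Real.GammaSeq_tendsto_Gamma β).inv₀ hΓβ.ne'
  have h3 := h1.mul h2
  rw [one_mul] at h3
  refine Filter.Tendsto.congr' ?_ h3
  filter_upwards [eventually_ge_atTop 1] with k hk
  exact (key k hk).symm

lemma gamma_ratio_bound {β : ℝ} (hβ : 0 < β) :
    ∃ C : ℝ, 0 < C ∧ ∀ k : ℕ, 1 ≤ k →
      C⁻¹ * (k : ℝ) ^ (β - 1) ≤ Real.Gamma (β + k) / (Real.Gamma ((k:ℝ) + 1) * Real.Gamma β) ∧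
      Real.Gamma (β + k) / (Real.Gamma ((k:ℝ) + 1) * Real.Gamma β) ≤ C * (k : ℝ) ^ (β - 1) := by
  have hΓβ : 0 < Real.Gamma β := Real.Gamma_pos_of_pos hβ
  set f : ℕ → ℝ := fun k =>
    Real.Gamma (β + k) / (Real.Gamma ((k:ℝ) + 1) * Real.Gamma β * (k:ℝ) ^ (β - 1)) with hf
  have hpos : ∀ k, 1 ≤ k → 0 < f k := by
    intro k hk
    have hk0 : (0:ℝ) < k := by exact_mod_cast hk
    have h1 : 0 < Real.Gamma (β + k) := Real.Gamma_pos_of_pos (by positivity)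
    have h2 : 0 < Real.Gamma ((k:ℝ) + 1) := Real.Gamma_pos_of_pos (by positivity)
    have h3 : (0:ℝ) < (k:ℝ) ^ (β - 1) := Real.rpow_pos_of_pos hk0 _
    simp only [hf]
    positivity
  obtain ⟨C, hC, hCb⟩ := bound_of_tendsto (by positivity) hpos (gamma_ratio_tendsto hβ)
  refine ⟨C, hC, fun k hk => ?_⟩
  have hk0 : (0:ℝ) < k := by exact_mod_cast hk
  have h3 : (0:ℝ) < (k:ℝ) ^ (β - 1) := Real.rpow_pos_of_pos hk0 _
  have heq : Real.Gamma (β + k) / (Real.Gamma ((k:ℝ) + 1) * Real.Gamma β)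
      = f k * (k:ℝ) ^ (β - 1) := by
    simp only [hf]
    field_simp
  obtain ⟨hl, hr⟩ := hCb k hk
  constructor
  · rw [heq]; exact mul_le_mul_of_nonneg_right hl h3.le
  · rw [heq]; exact mul_le_mul_of_nonneg_right hr h3.le

/-- The explicit stationary vector of the single-column chain:
`π_k = [Γ(M+1)/Γ(M+1−k)]·[Γ(β+M−k)/Γ(β+M)]·p/(p+αq)` with `β = pM/(αq)`. -/
noncomputable def piDist (M : ℕ) (α p q : ℝ) (k : ℕ) : ℝ :=
  (Real.Gamma (M + 1) / Real.Gamma ((M : ℝ) + 1 - k)) *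
    (Real.Gamma (p * M / (α * q) + M - k) / Real.Gamma (p * M / (α * q) + M)) *
    (p / (p + α * q))

private lemma piDist_ratio (M : ℕ) (hM : 1 ≤ M) (α p q : ℝ) (hα : 0 < α)
    (hp : p ∈ Set.Ioo (0:ℝ) 1) (hq : q ∈ Set.Ioo (0:ℝ) 1) (hpq : p + q = 1)
    (k : ℕ) (hk : k ≤ M) :
    piDist M α p q (M - k) / piDist M α p q M =
      Real.Gamma (p * M / (α * q) + k) /
        (Real.Gamma ((k : ℝ) + 1) * Real.Gamma (p * M / (α * q))) := by
  obtain ⟨hp0, hp1⟩ := hp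
  obtain ⟨hq0, hq1⟩ := hq
  set β := p * (M:ℝ) / (α * q) with hβdef
  have hM0 : (0:ℝ) < M := by exact_mod_cast hM
  have hβ : 0 < β := by rw [hβdef]; positivity
  have hMk : ((M - k : ℕ) : ℝ) = (M:ℝ) - k := Nat.cast_sub hk
  have hΓ1 : Real.Gamma ((k:ℝ) + 1) ≠ 0 := (Real.Gamma_pos_of_pos (by positivity)).ne'
  have hΓ2 : Real.Gamma (β + M) ≠ 0 := (Real.Gamma_pos_of_pos (by positivity)).ne'
  have hΓ3 : Real.Gamma ((M:ℝ) + 1) ≠ 0 := (Real.Gamma_pos_of_pos (by positivity)).ne'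
  have hΓ4 : Real.Gamma β ≠ 0 := (Real.Gamma_pos_of_pos hβ).ne'
  have hΓ5 : Real.Gamma (β + k) ≠ 0 := (Real.Gamma_pos_of_pos (by positivity)).ne'
  have hpne : p ≠ 0 := hp0.ne'
  have hden : p + α * q ≠ 0 := by positivity
  simp only [piDist, hMk]
  rw [show (M:ℝ) + 1 - ((M:ℝ) - k) = (k:ℝ) + 1 by ring,
      show β + (M:ℝ) - ((M:ℝ) - k) = β + k by ring,
      show (M:ℝ) + 1 - (M:ℝ) = 1 by ring,
      show β + (M:ℝ) - (M:ℝ) = β by ring,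
      Real.Gamma_one]
  field_simp

/-- **Stationary ratio of `k` zeros to no zeros.**
First, `π_{M−k}/π_M = Γ(β+k)/(Γ(k+1)·Γ(β))` for all `0 ≤ k ≤ M`; second, for every fixed
`β > 0` there is a constant `C > 0` depending only on `β` such that for every `M ≥ 1`,
all admissible parameters with `pM/(αq) = β`, and every `1 ≤ k ≤ M`,
`C⁻¹·k^{β−1} ≤ π_{M−k}/π_M ≤ C·k^{β−1}`.  In the single-column chain the state `M−k`
corresponds to seeing exactly `k` zeros and state `M` to seeing no zeros. -/
theorem stationary_zero_ratio :
    (∀ M : ℕ, 1 ≤ M → ∀ α p q : ℝ, 0 < α →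
      p ∈ Set.Ioo (0 : ℝ) 1 → q ∈ Set.Ioo (0 : ℝ) 1 → p + q = 1 →
      ∀ k ≤ M, piDist M α p q (M - k) / piDist M α p q M =
        Real.Gamma (p * M / (α * q) + k) /
          (Real.Gamma ((k : ℝ) + 1) * Real.Gamma (p * M / (α * q)))) ∧
    (∀ β : ℝ, 0 < β → ∃ C : ℝ, 0 < C ∧
      ∀ M : ℕ, 1 ≤ M → ∀ α p q : ℝ, 0 < α →
        p ∈ Set.Ioo (0 : ℝ) 1 → q ∈ Set.Ioo (0 : ℝ) 1 → p + q = 1 →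
        p * M / (α * q) = β →
        ∀ k : ℕ, 1 ≤ k → k ≤ M →
          C⁻¹ * (k : ℝ) ^ (β - 1) ≤ piDist M α p q (M - k) / piDist M α p q M ∧
            piDist M α p q (M - k) / piDist M α p q M ≤ C * (k : ℝ) ^ (β - 1)) := by
  constructor
  · intro M hM α p q hα hp hq hpq k hk
    exact piDist_ratio M hM α p q hα hp hq hpq k hk
  · intro β hβ
    obtain ⟨C, hC, hCb⟩ := gamma_ratio_bound hβ
    refine ⟨C, hC, fun M hM α p q hα hp hq hpq hβeq k hk1 hkM => ?_⟩
    rw [piDist_ratio M hM α p q hα hp hq hpq k hkM, hβeq]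
    exact hCb k hk1
end

section
/- Any solution f of the expected-hitting-time recursion satisfies 1 + p·f(0) = ∏_{k=1}^{M} (1 + (p/q)·(M/k)) = Γ(M+1+a)/(Γ(a+1)·Γ(M+1)); in particular f(0) = [Γ(M+1+a)/(Γ(a+1)·Γ(M+1)) − 1]/p. -/
/-- **Closed form for `1 + p·f(0)` in the expected-hitting-time recursion.**
Fix `M ≥ 1`, `p, q ∈ (0,1)` with `p + q = 1`, and set `a = pM/q`.  If `f : {0,…,M} → ℝ`
satisfies `f(M) = 0` and `f(i) = 1 + p·f(0) + q·(i/M)·f(i) + q·(1 − i/M)·f(i+1)` for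
`0 ≤ i ≤ M−1`, then `1 + p·f(0) = ∏_{k=1}^M (1 + (p/q)·(M/k)) = Γ(M+1+a)/(Γ(a+1)·Γ(M+1))`,
and in particular `f(0) = [Γ(M+1+a)/(Γ(a+1)·Γ(M+1)) − 1]/p`. -/
theorem hitting_time_product_formula
    (M : ℕ) (hM : 1 ≤ M) (p q : ℝ)
    (hp : p ∈ Set.Ioo (0 : ℝ) 1) (hq : q ∈ Set.Ioo (0 : ℝ) 1) (hpq : p + q = 1)
    (a : ℝ) (ha : a = p * M / q)
    (f : ℕ → ℝ) (hfM : f M = 0)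
    (hrec : ∀ i < M, f i = 1 + p * f 0 + q * ((i : ℝ) / M) * f i
      + q * (1 - (i : ℝ) / M) * f (i + 1)) :
    1 + p * f 0 = ∏ k ∈ Finset.Icc 1 M, (1 + (p / q) * ((M : ℝ) / k)) ∧
      1 + p * f 0 = Real.Gamma ((M : ℝ) + 1 + a) / (Real.Gamma (a + 1) * Real.Gamma (M + 1)) ∧
      f 0 = (Real.Gamma ((M : ℝ) + 1 + a) / (Real.Gamma (a + 1) * Real.Gamma (M + 1)) - 1) / p := by
  obtain ⟨hp0, hp1⟩ := hp
  obtain ⟨hq0, hq1⟩ := hq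
  have hM0 : 0 < M := hM
  have hMR : (0:ℝ) < M := by exact_mod_cast hM0
  have ha0 : 0 < a := by rw [ha]; positivity
  set c := 1 + p * f 0 with hc
  have step : ∀ i < M, c - p * f (i+1)
      = (c - p * f i) * (1 + (p/q) * ((M:ℝ)/((M:ℝ)-i))) := by
    intro i hi
    have hiR : (i:ℝ) < M := by exact_mod_cast hi
    have hMi : (0:ℝ) < (M:ℝ) - i := by linarith
    have h := hrec i hi
    have h' : (M:ℝ) * f i = (M:ℝ) * c + q * i * f i + q * ((M:ℝ) - i) * f (i+1) := by
      rw [hc] at h ⊢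
      field_simp at h
      linarith
    field_simp
    linear_combination p * h' + (p * (M:ℝ) * f i) * hpq
  have key : ∀ i ≤ M, c - p * f i
      = ∏ k ∈ Finset.range i, (1 + (p/q) * ((M:ℝ)/((M:ℝ)-k))) := by
    intro i
    induction i with
    | zero => intro _; simp [hc]
    | succ n ih =>
      intro h
      rw [Finset.prod_range_succ, ← ih (by omega)]
      exact step n (by omega)
  have hcM : c = ∏ k ∈ Finset.range M, (1 + (p/q) * ((M:ℝ)/((M:ℝ)-k))) := by
    have := key M le_rfl
    rw [hfM] at this
    simpa using this
  -- reindex the product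
  have prod1 : (∏ k ∈ Finset.range M, (1 + (p/q) * ((M:ℝ)/((M:ℝ)-k))))
      = ∏ k ∈ Finset.Icc 1 M, (1 + (p/q) * ((M:ℝ)/k)) := by
    rw [← Finset.Ico_add_one_right_eq_Icc, Finset.prod_Ico_eq_prod_range]
    have hMs : M + 1 - 1 = M := by omega
    rw [hMs]
    rw [← Finset.prod_range_reflect (fun j => 1 + (p/q) * ((M:ℝ)/((1 + j : ℕ) : ℝ))) M]
    apply Finset.prod_congr rfl
    intro k hk
    have hk' : k < M := Finset.mem_range.mp hk
    have h1 : (1 + (M - 1 - k) : ℕ) = M - k := by omega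
    simp only [h1]
    congr 2
    rw [Nat.cast_sub hk'.le]
  -- gamma formula for the product of (a+1+k)
  have gam : ∀ n : ℕ, Real.Gamma (a + 1 + n)
      = Real.Gamma (a+1) * ∏ k ∈ Finset.range n, (a + 1 + k) := by
    intro n
    induction n with
    | zero => simp
    | succ n ih =>
      have hne : a + 1 + (n:ℝ) ≠ 0 := by positivity
      have h1 : Real.Gamma (a + 1 + ((n:ℕ)+1:ℕ)) = (a+1+n) * Real.Gamma (a+1+n) := by
        push_cast
        rw [show a + 1 + ((n:ℝ)+1) = (a+1+(n:ℝ))+1 by ring]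
        exact Real.Gamma_add_one hne
      rw [h1, ih, Finset.prod_range_succ]
      ring
  have hGa : 0 < Real.Gamma (a+1) := Real.Gamma_pos_of_pos (by linarith)
  have hfacM : (0:ℝ) < Real.Gamma ((M:ℝ)+1) := by
    rw [Real.Gamma_nat_eq_factorial]
    positivity
  have prod2 : (∏ k ∈ Finset.Icc 1 M, (1 + (p/q) * ((M:ℝ)/k)))
      = Real.Gamma ((M:ℝ) + 1 + a) / (Real.Gamma (a+1) * Real.Gamma ((M:ℝ)+1)) := by
    have hfac : ∀ k ∈ Finset.Icc 1 M, (1 + (p/q) * ((M:ℝ)/k)) = (a + (k:ℝ)) / k := by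
      intro k hk
      have hk1 : 1 ≤ k := (Finset.mem_Icc.mp hk).1
      have hkR : (0:ℝ) < k := by exact_mod_cast hk1
      rw [ha]
      field_simp
      ring
    rw [Finset.prod_congr rfl hfac, Finset.prod_div_distrib]
    have h1 : (∏ k ∈ Finset.Icc 1 M, (a + (k:ℝ)))
        = Real.Gamma ((M:ℝ)+1+a) / Real.Gamma (a+1) := by
      have e1 : (∏ k ∈ Finset.Icc 1 M, (a + (k:ℝ)))
          = ∏ k ∈ Finset.range M, (a + 1 + (k:ℝ)) := by
        rw [← Finset.Ico_add_one_right_eq_Icc, Finset.prod_Ico_eq_prod_range]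
        have hMs : M + 1 - 1 = M := by omega
        rw [hMs]
        apply Finset.prod_congr rfl
        intro k _
        push_cast
        ring
      rw [e1, show (M:ℝ)+1+a = a+1+(M:ℕ) by push_cast; ring, gam M]
      field_simp
    have h2 : (∏ k ∈ Finset.Icc 1 M, (k:ℝ)) = Real.Gamma ((M:ℝ)+1) := by
      rw [Real.Gamma_nat_eq_factorial, ← Nat.cast_prod]
      norm_cast
      rw [← Finset.Ico_add_one_right_eq_Icc, Finset.prod_Ico_eq_prod_range]
      have hMs : M + 1 - 1 = M := by omega
      rw [hMs]
      simpa [add_comm] using Finset.prod_range_add_one_eq_factorial M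
    rw [h1, h2, div_div]
  have main1 : c = ∏ k ∈ Finset.Icc 1 M, (1 + (p/q) * ((M:ℝ)/k)) := hcM.trans prod1
  have main2 : c = Real.Gamma ((M:ℝ) + 1 + a) / (Real.Gamma (a+1) * Real.Gamma ((M:ℝ)+1)) :=
    main1.trans prod2
  refine ⟨main1, main2, ?_⟩
  rw [← main2, hc]
  field_simp
  ring
end

section
/- Any solution f of the expected-hitting-time recursion satisfies, for every 1 ≤ i ≤ M, the closed-form formula f(M−i) = M·(1 + p·f(0))·i!·Σ_{k=0}^{i−1} q^k / ( (i−k)! · ∏_{j=0}^{k} (pM + (i−j)q) ). -/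
lemma prod_step (a q : ℝ) (i k : ℕ) :
    ∏ j ∈ Finset.range (k + 2), (a + (((i : ℝ) + 1) - j) * q)
      = (∏ j ∈ Finset.range (k + 1), (a + ((i : ℝ) - j) * q)) * (a + ((i : ℝ) + 1) * q) := by
  rw [Finset.prod_range_succ']
  congr 1
  · apply Finset.prod_congr rfl
    intro j _
    push_cast
    ring
  · push_cast; ring

lemma Tstep (a q : ℝ) (i : ℕ) (hD : a + ((i : ℝ) + 1) * q ≠ 0) :
    (Nat.factorial (i + 1) : ℝ) *
      (∑ k ∈ Finset.range (i + 1), q ^ k /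
        ((Nat.factorial (i + 1 - k) : ℝ) *
          ∏ j ∈ Finset.range (k + 1), (a + (((i : ℝ) + 1) - j) * q)))
      * (a + ((i : ℝ) + 1) * q)
    = 1 + q * ((i : ℝ) + 1) * ((Nat.factorial i : ℝ) *
        ∑ k ∈ Finset.range i, q ^ k /
          ((Nat.factorial (i - k) : ℝ) *
            ∏ j ∈ Finset.range (k + 1), (a + ((i : ℝ) - j) * q))) := by
  set D := a + ((i : ℝ) + 1) * q with hDdef
  rw [Finset.sum_range_succ']
  have h1 : ∀ k ∈ Finset.range i,
      q ^ (k + 1) / ((Nat.factorial (i + 1 - (k + 1)) : ℝ) *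
          ∏ j ∈ Finset.range (k + 1 + 1), (a + (((i : ℝ) + 1) - j) * q))
        = (q / D) * (q ^ k / ((Nat.factorial (i - k) : ℝ) *
            ∏ j ∈ Finset.range (k + 1), (a + ((i : ℝ) - j) * q))) := by
    intro k hk
    have hsub : i + 1 - (k + 1) = i - k := by omega
    rw [hsub, prod_step, pow_succ]
    simp [div_eq_mul_inv, mul_inv]
    ring
  rw [Finset.sum_congr rfl h1, ← Finset.mul_sum]
  simp only [pow_zero, Nat.sub_zero, zero_add, Finset.prod_range_one, Nat.cast_zero, sub_zero]
  have hfact : (Nat.factorial i : ℝ) ≠ 0 := Nat.cast_ne_zero.2 (Nat.factorial_ne_zero _)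
  rw [Nat.factorial_succ]
  push_cast
  field_simp
  rw [← hDdef, div_self hD]
  ring



/-- **Closed form for the expected hitting times.**
Fix `M ≥ 1`, `p, q ∈ (0,1)` with `p + q = 1`.  If `f : {0,…,M} → ℝ` satisfies `f(M) = 0` and
`f(i) = 1 + p·f(0) + q·(i/M)·f(i) + q·(1 − i/M)·f(i+1)` for `0 ≤ i ≤ M−1`, then for every
`1 ≤ i ≤ M`,
`f(M−i) = M·(1 + p·f(0))·i!·∑_{k=0}^{i−1} q^k / ((i−k)!·∏_{j=0}^k (pM + (i−j)q))`. -/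
theorem hitting_time_closed_form
    (M : ℕ) (hM : 1 ≤ M) (p q : ℝ)
    (hp : p ∈ Set.Ioo (0 : ℝ) 1) (hq : q ∈ Set.Ioo (0 : ℝ) 1) (hpq : p + q = 1)
    (f : ℕ → ℝ) (hfM : f M = 0)
    (hrec : ∀ i < M, f i = 1 + p * f 0 + q * ((i : ℝ) / M) * f i
      + q * (1 - (i : ℝ) / M) * f (i + 1)) :
    ∀ i : ℕ, 1 ≤ i → i ≤ M →
      f (M - i) = (M : ℝ) * (1 + p * f 0) * (Nat.factorial i : ℝ) *
        ∑ k ∈ Finset.range i, q ^ k /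
          ((Nat.factorial (i - k) : ℝ) *
            ∏ j ∈ Finset.range (k + 1), (p * M + ((i : ℝ) - j) * q)) := by
  have hMpos : (0 : ℝ) < M := by exact_mod_cast Nat.lt_of_lt_of_le Nat.zero_lt_one hM
  have hM0 : (M : ℝ) ≠ 0 := ne_of_gt hMpos
  suffices h : ∀ i, i ≤ M → f (M - i) = (M : ℝ) * (1 + p * f 0) * (Nat.factorial i : ℝ) *
        ∑ k ∈ Finset.range i, q ^ k /
          ((Nat.factorial (i - k) : ℝ) *
            ∏ j ∈ Finset.range (k + 1), (p * M + ((i : ℝ) - j) * q)) by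
    exact fun i _ h2 => h i h2
  intro i
  induction i with
  | zero => intro _; simpa using hfM
  | succ i ih =>
    intro hi1
    have hiM : i ≤ M := by omega
    have ihv := ih hiM
    have hm : M - (i + 1) < M := by omega
    have hrec' := hrec (M - (i + 1)) hm
    have hsub : M - (i + 1) + 1 = M - i := by omega
    rw [hsub] at hrec'
    have hcast : ((M - (i + 1) : ℕ) : ℝ) = (M : ℝ) - ((i : ℝ) + 1) := by
      push_cast [Nat.cast_sub hi1]; ring
    rw [hcast] at hrec'
    have hD : (0 : ℝ) < p * M + ((i : ℝ) + 1) * q := by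
      have h1 : (0 : ℝ) < p * M := mul_pos hp.1 hMpos
      have h2 : (0 : ℝ) < ((i : ℝ) + 1) * q := mul_pos (by positivity) hq.1
      linarith
    have key : f (M - (i + 1)) * (p * M + ((i : ℝ) + 1) * q)
        = M * (1 + p * f 0) + q * ((i : ℝ) + 1) * f (M - i) := by
      field_simp at hrec'
      linear_combination hrec' + f (M - (i + 1)) * (M : ℝ) * hpq
    have hf : f (M - (i + 1))
        = (M * (1 + p * f 0) + q * ((i : ℝ) + 1) * f (M - i)) / (p * M + ((i : ℝ) + 1) * q) :=
      eq_div_of_mul_eq hD.ne' key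
    rw [hf, ihv, eq_comm, eq_div_iff hD.ne']
    have hT := Tstep (p * M) q i hD.ne'
    push_cast
    linear_combination ((M : ℝ) * (1 + p * f 0)) * hT
end

section
/- Any solution f of the expected-hitting-time recursion is nonincreasing on {0,…,M−1} and satisfies, for every 0 ≤ i ≤ M−1, the two-sided bound (a/(a+1))·f(0) ≤ f(M−1) ≤ f(i) ≤ f(0). -/
/-- **Monotonicity and two-sided bounds for the expected hitting times.**
Fix `M ≥ 1`, `p, q ∈ (0,1)` with `p + q = 1`, and set `a = pM/q`.  If `f : {0,…,M} → ℝ`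
satisfies `f(M) = 0` and `f(i) = 1 + p·f(0) + q·(i/M)·f(i) + q·(1 − i/M)·f(i+1)` for
`0 ≤ i ≤ M−1`, then `f` is nonincreasing on `{0,…,M−1}` and for every `0 ≤ i ≤ M−1` one has
`(a/(a+1))·f(0) ≤ f(M−1) ≤ f(i) ≤ f(0)`. -/
theorem hitting_time_monotone_bounds
    (M : ℕ) (hM : 1 ≤ M) (p q : ℝ)
    (hp : p ∈ Set.Ioo (0 : ℝ) 1) (hq : q ∈ Set.Ioo (0 : ℝ) 1) (hpq : p + q = 1)
    (a : ℝ) (ha : a = p * M / q)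
    (f : ℕ → ℝ) (hfM : f M = 0)
    (hrec : ∀ i < M, f i = 1 + p * f 0 + q * ((i : ℝ) / M) * f i
      + q * (1 - (i : ℝ) / M) * f (i + 1)) :
    (∀ i j : ℕ, i ≤ j → j ≤ M - 1 → f j ≤ f i) ∧
      ∀ i : ℕ, i ≤ M - 1 →
        (a / (a + 1)) * f 0 ≤ f (M - 1) ∧ f (M - 1) ≤ f i ∧ f i ≤ f 0 := by
  obtain ⟨hp0, hp1⟩ := hp
  obtain ⟨hq0, hq1⟩ := hq
  have hMR : (0 : ℝ) < (M : ℝ) := by exact_mod_cast hM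
  -- key difference formula
  have dfor : ∀ i < M, (f i - f (i + 1)) * (q * (1 - (i : ℝ) / M))
      = 1 + p * (f 0 - f i) := by
    intro i hi
    have e := hrec i hi
    linear_combination e + (f i) * hpq
  have cpos : ∀ i < M, 0 < q * (1 - (i : ℝ) / M) := by
    intro i hi
    have hiM : (i : ℝ) < (M : ℝ) := by exact_mod_cast hi
    have : (i : ℝ) / M < 1 := (div_lt_one hMR).mpr hiM
    have : 0 < 1 - (i : ℝ) / M := by linarith
    positivity
  -- f 0 dominates
  have top : ∀ i ≤ M, 0 ≤ f 0 - f i := by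
    intro i hi
    induction i with
    | zero => simp
    | succ n ih =>
      have hn : n < M := by omega
      have hn' := ih (by omega)
      have hd := dfor n hn
      have hc := cpos n hn
      have hstep : 0 ≤ f n - f (n + 1) := by
        nlinarith
      linarith
  -- one-step monotonicity
  have step : ∀ i < M, f (i + 1) ≤ f i := by
    intro i hi
    have hd := dfor i hi
    have hc := cpos i hi
    have := top i (le_of_lt hi)
    nlinarith
  -- global monotonicity
  have mono : ∀ i j : ℕ, i ≤ j → j ≤ M → f j ≤ f i := by
    intro i j hij
    induction j, hij using Nat.le_induction with
    | base => intro _; exact le_refl _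
    | succ n hn ih =>
      intro h
      exact le_trans (step n (by omega)) (ih (by omega))
  obtain ⟨m, rfl⟩ : ∃ m, M = m + 1 := ⟨M - 1, by omega⟩
  have hm1 : (m + 1 : ℕ) - 1 = m := by omega
  rw [hm1]
  have hf0 : 0 ≤ f 0 := by
    have := top (m + 1) le_rfl
    rw [hfM] at this
    linarith
  -- formula at M-1
  have hdm := dfor m (by omega)
  rw [hfM] at hdm
  have hMq : p * (m + 1 : ℝ) + q > 0 := by positivity
  have hMcast : ((m + 1 : ℕ) : ℝ) = (m : ℝ) + 1 := by push_cast; ring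
  rw [hMcast] at hdm
  have hm1pos : (0 : ℝ) < (m : ℝ) + 1 := by positivity
  -- f m * (p*(m+1) + q) = (m+1) + p*(m+1)*f 0
  have hfm : f m * (p * ((m : ℝ) + 1) + q) = ((m : ℝ) + 1) + p * ((m : ℝ) + 1) * f 0 := by
    have h1 : (f m - 0) * (q * (1 - (m : ℝ) / ((m : ℝ) + 1))) * ((m : ℝ) + 1)
        = (1 + p * (f 0 - f m)) * ((m : ℝ) + 1) := by rw [hdm]
    field_simp at h1
    nlinarith [h1]
  have harat : a / (a + 1) = p * ((m : ℝ) + 1) / (p * ((m : ℝ) + 1) + q) := by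
    have hq' : q ≠ 0 := ne_of_gt hq0
    have hd : p * ((m : ℝ) + 1) + q ≠ 0 := ne_of_gt hMq
    rw [ha, hMcast]
    field_simp
  have hlow : a / (a + 1) * f 0 ≤ f m := by
    rw [harat, div_mul_eq_mul_div, div_le_iff₀ hMq]
    nlinarith [hf0, hfm, hm1pos]
  constructor
  · intro i j hij hjm
    exact mono i j hij (by omega)
  · intro i hi
    exact ⟨hlow, mono i m (by omega) (by omega), mono 0 i (by omega) (by omega)⟩
end

section
/- Fix a > 0 and for each integer M ≥ 1 set p_M = a/(M+a), q_M = M/(M+a) (so that p_M·M/q_M = a and p_M + q_M = 1), and let f_M be the solution of the expected-hitting-time recursion with parameters (M, p_M, q_M). Then f_M(0) ~ M^{a+1}/(a·Γ(a+1)) as M → ∞, i.e. lim_{M→∞} f_M(0)·a·Γ(a+1)/M^{a+1} = 1. -/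
open Finset Filter Real

namespace HTAux

noncomputable def D (a : ℝ) (M i : ℕ) : ℝ :=
  ∏ k ∈ Finset.Ico i M, (((M : ℝ) - k) / ((M : ℝ) + a - k))

lemma D_self (a : ℝ) (M : ℕ) : D a M M = 1 := by simp [D]

lemma D_succ (a : ℝ) {M i : ℕ} (h : i < M) :
    D a M i = (((M:ℝ) - i)/((M:ℝ) + a - i)) * D a M (i+1) := by
  rw [D, Finset.prod_eq_prod_Ico_succ_bot h]; rfl

lemma D_pos {a : ℝ} (ha : 0 < a) (M i : ℕ) : 0 < D a M i := by
  apply Finset.prod_pos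
  intro k hk
  simp only [Finset.mem_Ico] at hk
  have h1 : (k:ℝ) < (M:ℝ) := by exact_mod_cast hk.2
  have : (0:ℝ) < (M:ℝ) - k := by linarith
  exact div_pos this (by linarith)

lemma D_zero_eq (a : ℝ) (M : ℕ) :
    D a M 0 = ∏ j ∈ Finset.range M, (((j:ℝ)+1)/(((j:ℝ)+1)+a)) := by
  rw [D, ← Finset.range_eq_Ico,
    ← Finset.prod_range_reflect (fun j => (((j:ℝ)+1)/(((j:ℝ)+1)+a))) M]
  apply Finset.prod_congr rfl
  intro k hk
  simp only [Finset.mem_range] at hk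
  have : ((M - 1 - k : ℕ) : ℝ) = (M:ℝ) - 1 - k := by
    have h1 : 1 + k ≤ M := by omega
    rw [Nat.sub_sub, Nat.cast_sub h1]
    push_cast; ring
  rw [this]; ring_nf

lemma D_gammaSeq {a : ℝ} (ha : 0 < a) (M : ℕ) :
    (M:ℝ) ^ a * D a M 0 = a * Real.GammaSeq a M := by
  rw [D_zero_eq, Real.GammaSeq, Finset.prod_range_succ' (fun j => a + (j:ℝ)) M]
  rw [Finset.prod_div_distrib]
  have h1 : ∏ j ∈ Finset.range M, ((j:ℝ)+1) = (M.factorial : ℝ) := by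
    exact_mod_cast Finset.prod_range_add_one_eq_factorial M
  have h3 : (0:ℝ) < ∏ j ∈ Finset.range M, (((j:ℝ)+1)+a) := by
    apply Finset.prod_pos; intro j _; positivity
  rw [h1]
  push_cast
  have h2 : ∏ k ∈ Finset.range M, (a + ((k:ℝ)+1)) = ∏ j ∈ Finset.range M, (((j:ℝ)+1)+a) := by
    apply Finset.prod_congr rfl; intro j _; ring
  rw [h2]
  field_simp
  ring

end HTAux

set_option maxHeartbeats 1000000 in
/-- **Asymptotics of the expected hitting time of the top state.**
Fix `a > 0` and for each `M ≥ 1` take `p_M = a/(M+a)`, `q_M = M/(M+a)` (so `p_M M/q_M = a` and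
`p_M + q_M = 1`).  If for each `M ≥ 1` the function `f M : {0,…,M} → ℝ` solves the
expected-hitting-time recursion `f M M = 0`,
`f M i = 1 + p_M·(f M 0) + q_M·(i/M)·(f M i) + q_M·(1 − i/M)·(f M (i+1))` for `i < M`,
then `f M 0 ∼ M^{a+1}/(a·Γ(a+1))` as `M → ∞`, i.e.
`f M 0 · a · Γ(a+1)/M^{a+1} → 1`. -/
theorem hitting_time_asymptotics
    (a : ℝ) (ha : 0 < a) (f : ℕ → ℕ → ℝ)
    (hfM : ∀ M : ℕ, 1 ≤ M → f M M = 0)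
    (hrec : ∀ M : ℕ, 1 ≤ M → ∀ i < M,
      f M i = 1 + (a / (M + a)) * f M 0
        + ((M : ℝ) / (M + a)) * ((i : ℝ) / M) * f M i
        + ((M : ℝ) / (M + a)) * (1 - (i : ℝ) / M) * f M (i + 1)) :
    Filter.Tendsto (fun M : ℕ => f M 0 * a * Real.Gamma (a + 1) / (M : ℝ) ^ (a + 1))
      Filter.atTop (nhds 1) := by
  have haG : 0 < Real.Gamma a := Real.Gamma_pos_of_pos ha
  have ha' : a ≠ 0 := ne_of_gt ha
  -- closed form for f M 0
  have hf0 : ∀ M : ℕ, 1 ≤ M →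
      f M 0 = ((M:ℝ) + a) * (1 - HTAux.D a M 0) / (a * HTAux.D a M 0) := by
    intro M hM
    have hMpos : (0:ℝ) < M := by exact_mod_cast hM
    have hMa : (0:ℝ) < (M:ℝ) + a := by linarith
    have claim : ∀ n i, i + n = M →
        f M i = ((M:ℝ) + a + a * f M 0) * (1 - HTAux.D a M i) / a := by
      intro n
      induction n with
      | zero =>
        intro i hi
        have h0 : i = M := by omega
        rw [h0, hfM M hM, HTAux.D_self]
        ring
      | succ n ih =>
        intro i hi
        have hiM : i < M := by omega
        have hrec' := hrec M hM i hiM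
        have ih' := ih (i+1) (by omega)
        have hiR : (i:ℝ) < M := by exact_mod_cast hiM
        have hMai : (0:ℝ) < (M:ℝ) + a - i := by linarith
        have hMai' : ((M:ℝ) + a - i) ≠ 0 := ne_of_gt hMai
        have hc : (((M:ℝ)+a)^2*(M:ℝ)^2) ≠ 0 := by positivity
        have keyc : (((M:ℝ) + a - (i:ℝ)) * f M i) * (((M:ℝ)+a)^2*(M:ℝ)^2)
            = (((M:ℝ) + a + a * f M 0) + ((M:ℝ) - (i:ℝ)) * f M (i+1))
              * (((M:ℝ)+a)^2*(M:ℝ)^2) := by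
          field_simp at hrec'
          linear_combination (((M:ℝ)+a)^2*(M:ℝ)^2) * hrec'
        have key := mul_right_cancel₀ hc keyc
        rw [ih'] at key
        rw [HTAux.D_succ a hiM]
        field_simp at key ⊢
        linear_combination key
    have c0 := claim M 0 (by omega)
    have hD0 := HTAux.D_pos ha M 0
    field_simp at c0 ⊢
    linear_combination c0
  -- limit computation
  have hGseq := Real.GammaSeq_tendsto_Gamma a
  have hMaT : Filter.Tendsto (fun M : ℕ => (M:ℝ)^a) Filter.atTop Filter.atTop :=
    (tendsto_rpow_atTop ha).comp tendsto_natCast_atTop_atTop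
  have hDlim : Filter.Tendsto (fun M : ℕ => HTAux.D a M 0) Filter.atTop (nhds 0) := by
    have h1 : Filter.Tendsto (fun M : ℕ => a * Real.GammaSeq a M * ((M:ℝ)^a)⁻¹)
        Filter.atTop (nhds (a * Real.Gamma a * 0)) :=
      (tendsto_const_nhds.mul hGseq).mul hMaT.inv_tendsto_atTop
    rw [mul_zero] at h1
    apply h1.congr'
    filter_upwards [Filter.eventually_ge_atTop 1] with M hM
    have hMpos : (0:ℝ) < (M:ℝ)^a := Real.rpow_pos_of_pos (by exact_mod_cast hM) a
    have hg := HTAux.D_gammaSeq ha M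
    rw [← hg]
    field_simp
  have hquot : Filter.Tendsto (fun M : ℕ => Real.Gamma (a+1) / (a * Real.GammaSeq a M))
      Filter.atTop (nhds 1) := by
    have h1 : Filter.Tendsto (fun M : ℕ => Real.Gamma (a+1) / (a * Real.GammaSeq a M))
        Filter.atTop (nhds (Real.Gamma (a+1) / (a * Real.Gamma a))) :=
      tendsto_const_nhds.div (tendsto_const_nhds.mul hGseq) (by positivity)
    have h2 : Real.Gamma (a+1) / (a * Real.Gamma a) = 1 := by
      rw [Real.Gamma_add_one ha']; exact div_self (by positivity)
    rwa [h2] at h1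
  have hratio : Filter.Tendsto (fun M : ℕ => ((M:ℝ)+a)/(M:ℝ)) Filter.atTop (nhds 1) := by
    have h1 : Filter.Tendsto (fun M : ℕ => 1 + a * ((M:ℝ))⁻¹) Filter.atTop (nhds (1 + a * 0)) :=
      tendsto_const_nhds.add (tendsto_const_nhds.mul
        tendsto_natCast_atTop_atTop.inv_tendsto_atTop)
    rw [mul_zero, add_zero] at h1
    apply h1.congr'
    filter_upwards [Filter.eventually_ge_atTop 1] with M hM
    have hMpos : (0:ℝ) < M := by exact_mod_cast hM
    field_simp
  have main : Filter.Tendsto (fun M : ℕ => ((M:ℝ)+a)/(M:ℝ) * (1 - HTAux.D a M 0)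
      * (Real.Gamma (a+1) / (a * Real.GammaSeq a M))) Filter.atTop
      (nhds (1 * (1 - 0) * 1)) :=
    (hratio.mul (tendsto_const_nhds.sub hDlim)).mul hquot
  norm_num at main
  apply main.congr'
  filter_upwards [Filter.eventually_ge_atTop 1] with M hM
  have hD0 := HTAux.D_pos ha M 0
  have hg := HTAux.D_gammaSeq ha M
  have hMpos : (0:ℝ) < M := by exact_mod_cast hM
  have hMA : (M:ℝ)^(a+1) = (M:ℝ)^a * M := by
    rw [Real.rpow_add hMpos, Real.rpow_one]
  have hMapos : (0:ℝ) < (M:ℝ)^a := Real.rpow_pos_of_pos hMpos a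
  rw [hf0 M hM, ← hg, hMA]
  field_simp
end

section
/- Let T_0,…,T_{M−1} be independent random variables with T_i exponentially distributed with rate q·(1 − i/M), set T = T_0 + ⋯ + T_{M−1}, and let H be an exponential random variable with rate λ > 0 independent of (T_0,…,T_{M−1}). Then P(T < H) = Γ(M+1)·Γ(1 + Mλ/q) / Γ(M + 1 + Mλ/q). In particular, with λ = p/N and b = Mp/(qN), the probability that a fixed column is all ones under the stationary distribution equals Γ(M+1)·Γ(1+b)/Γ(M+1+b). -/
open MeasureTheory ProbabilityTheory

section AuxLemmas

variable {Ω : Type*} [MeasurableSpace Ω] {μ : Measure Ω}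


lemma my_iIndepFun_ae_eq {ι : Type*} {β : ι → Type*} [m : ∀ i, MeasurableSpace (β i)]
    {f g : ∀ i, Ω → β i} (hf : iIndepFun f μ) (h : ∀ i, f i =ᵐ[μ] g i) :
    iIndepFun g μ := by
  rw [iIndepFun_iff_measure_inter_preimage_eq_mul] at hf ⊢
  intro S sets hsets
  have h1 : ∀ i : ι, (g i ⁻¹' sets i : Set Ω) =ᵐ[μ] (f i ⁻¹' sets i : Set Ω) := by
    intro i
    filter_upwards [h i] with ω hω
    simp only [Set.mem_preimage, eq_iff_iff]
    show g i ω ∈ sets i ↔ f i ω ∈ sets i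
    rw [hω]
  have h2 : (⋂ i ∈ S, g i ⁻¹' sets i : Set Ω) =ᵐ[μ] (⋂ i ∈ S, f i ⁻¹' sets i : Set Ω) := by
    have hall : ∀ᵐ ω ∂μ, ∀ i ∈ S, f i ω = g i ω := by
      rw [Filter.eventually_all_finset]
      exact fun i _ => h i
    filter_upwards [hall] with ω hω
    show (ω ∈ ⋂ i ∈ S, g i ⁻¹' sets i) = (ω ∈ ⋂ i ∈ S, f i ⁻¹' sets i)
    rw [eq_iff_iff]
    simp only [Set.mem_iInter, Set.mem_preimage]
    exact forall₂_congr fun i hi => by rw [hω i hi]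
  rw [measure_congr h2, hf S hsets]
  exact Finset.prod_congr rfl fun i _ => (measure_congr (h1 i)).symm

lemma my_expMeasure_Iio_zero (r : ℝ) : expMeasure r (Set.Iio 0) = 0 := by
  rw [expMeasure, gammaMeasure, withDensity_apply _ measurableSet_Iio]
  exact lintegral_exponentialPDF_of_nonpos le_rfl

lemma my_expMeasure_Ioi {r t : ℝ} (hr : 0 < r) (ht : 0 ≤ t) :
    expMeasure r (Set.Ioi t) = ENNReal.ofReal (Real.exp (-(r * t))) := by
  have hprob := isProbabilityMeasure_expMeasure hr
  have hIic : expMeasure r (Set.Iic t) = ENNReal.ofReal (1 - Real.exp (-(r * t))) := by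
    rw [expMeasure, gammaMeasure, withDensity_apply _ measurableSet_Iic]
    rw [show gammaPDF 1 r = exponentialPDF r from rfl]
    rw [lintegral_exponentialPDF_eq_antiDeriv hr t, if_pos ht]
  have hcompl := measure_compl (μ := expMeasure r) (measurableSet_Iic (a := t))
    (measure_ne_top _ _)
  rw [Set.compl_Iic] at hcompl
  have hexp1 : Real.exp (-(r * t)) ≤ 1 := by
    rw [Real.exp_le_one_iff]; nlinarith
  rw [hcompl, hIic, measure_univ, ← ENNReal.ofReal_one,
    ← ENNReal.ofReal_sub _ (by linarith)]
  norm_num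

lemma my_lintegral_exp_neg_expMeasure {r lam : ℝ} (hr : 0 < r) (hlam : 0 < lam) :
    ∫⁻ x, ENNReal.ofReal (Real.exp (-(lam * x))) ∂(expMeasure r)
      = ENNReal.ofReal (r / (r + lam)) := by
  have hmeas : Measurable (exponentialPDF r) :=
    (measurable_exponentialPDFReal r).ennreal_ofReal
  rw [expMeasure, gammaMeasure, show gammaPDF 1 r = exponentialPDF r from rfl,
    lintegral_withDensity_eq_lintegral_mul _ hmeas
      (by exact (measurable_id.const_mul lam).neg.exp.ennreal_ofReal)]
  have hkey : ∀ x : ℝ, (exponentialPDF r * fun x => ENNReal.ofReal (Real.exp (-(lam * x)))) x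
      = ENNReal.ofReal (r / (r + lam)) * exponentialPDF (r + lam) x := by
    intro x
    simp only [Pi.mul_apply]
    rcases lt_or_ge x 0 with hx | hx
    · rw [exponentialPDF_of_neg hx, exponentialPDF_of_neg hx, zero_mul, mul_zero]
    · rw [exponentialPDF_of_nonneg hx, exponentialPDF_of_nonneg hx,
        ← ENNReal.ofReal_mul (by positivity), ← ENNReal.ofReal_mul (by positivity)]
      congr 1
      rw [show -((r + lam) * x) = -(r * x) + -(lam * x) by ring, Real.exp_add]
      field_simp
  simp_rw [hkey]
  have hm2 : Measurable (exponentialPDF (r + lam)) :=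
    (measurable_exponentialPDFReal _).ennreal_ofReal
  rw [lintegral_const_mul _ hm2,
    lintegral_exponentialPDF_eq_one (by linarith : (0:ℝ) < r + lam), mul_one]

lemma my_mgf_expMeasure {X : Ω → ℝ} {r lam : ℝ} (hr : 0 < r) (hlam : 0 < lam)
    (hX : Measurable X) (hmap : Measure.map X μ = expMeasure r) :
    mgf X μ (-lam) = r / (r + lam) := by
  have h1 : mgf X μ (-lam) = ∫ ω, Real.exp (-(lam * X ω)) ∂μ := by
    simp only [mgf, neg_mul]
  rw [h1, integral_eq_lintegral_of_nonneg_ae (f := fun ω => Real.exp (-(lam * X ω))) (Filter.Eventually.of_forall fun ω => (Real.exp_pos _).le)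
      (((hX.const_mul lam).neg.exp).aestronglyMeasurable)]
  have hf : Measurable fun x : ℝ => ENNReal.ofReal (Real.exp (-(lam * x))) := by fun_prop
  have h2 : ∫⁻ ω, ENNReal.ofReal (Real.exp (-(lam * X ω))) ∂μ
      = ∫⁻ x, ENNReal.ofReal (Real.exp (-(lam * x))) ∂(Measure.map X μ) :=
    (lintegral_map hf hX).symm
  rw [h2, hmap, my_lintegral_exp_neg_expMeasure hr hlam,
    ENNReal.toReal_ofReal (by positivity)]

lemma my_gamma_prod (b : ℝ) (hb : 0 < b) :
    ∀ n : ℕ, ∏ k ∈ Finset.range n, (((k : ℝ) + 1) / ((k : ℝ) + 1 + b))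
      = Real.Gamma ((n : ℝ) + 1) * Real.Gamma (1 + b) / Real.Gamma ((n : ℝ) + 1 + b)
  | 0 => by
    have h0 : Real.Gamma (1 + b) ≠ 0 := (Real.Gamma_pos_of_pos (by linarith)).ne'
    simp only [Finset.range_zero, Finset.prod_empty, Nat.cast_zero]
    rw [show (0:ℝ) + 1 + b = 1 + b by ring, show (0:ℝ) + 1 = 1 by ring, Real.Gamma_one, one_mul]
    field_simp
  | (n + 1) => by
    rw [Finset.prod_range_succ, my_gamma_prod b hb n]
    have h1 : Real.Gamma (((n:ℕ):ℝ) + 1 + 1) = ((n:ℝ) + 1) * Real.Gamma ((n:ℝ) + 1) :=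
      Real.Gamma_add_one (by positivity)
    have h2 : Real.Gamma ((n:ℝ) + 1 + b + 1) = ((n:ℝ) + 1 + b) * Real.Gamma ((n:ℝ) + 1 + b) :=
      Real.Gamma_add_one (by positivity)
    have hne1 : Real.Gamma ((n:ℝ) + 1 + b) ≠ 0 := (Real.Gamma_pos_of_pos (by positivity)).ne'
    have hne2 : ((n:ℝ) + 1 + b) ≠ 0 := by positivity
    have hne3 : Real.Gamma ((n:ℝ) + 1 + b + 1) ≠ 0 := (Real.Gamma_pos_of_pos (by positivity)).ne'
    push_cast
    rw [show (n:ℝ) + 1 + 1 + b = ((n:ℝ) + 1 + b) + 1 by ring,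
      show (n:ℝ) + 1 + 1 = ((n:ℝ) + 1) + 1 by ring,
      Real.Gamma_add_one (by positivity : ((n:ℝ) + 1) ≠ 0),
      Real.Gamma_add_one hne2]
    field_simp

end AuxLemmas

/-- **Probability that the coupon-collector time beats an independent exponential clock.**
Fix `M ≥ 1` and `q ∈ (0,1)`.  Let `T_0,…,T_{M−1}` be independent with `T_i` exponential of
rate `q·(1 − i/M)`, set `T = T_0 + ⋯ + T_{M−1}`, and let `H` be exponential of rate `λ > 0`,
independent of `(T_0,…,T_{M−1})` (jointly, via the family `Fin.snoc T H`).  Then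
`P(T < H) = Γ(M+1)·Γ(1 + Mλ/q)/Γ(M+1+Mλ/q)`; in particular, with `λ = p/N` and
`b = Mp/(qN)` this probability, which is the stationary probability that a fixed column is
all ones, equals `Γ(M+1)·Γ(1+b)/Γ(M+1+b)`. -/
theorem prob_coupon_collector_lt_exponential
    {Ω : Type*} [MeasurableSpace Ω] (μ : Measure Ω) [IsProbabilityMeasure μ]
    (M : ℕ) (hM : 1 ≤ M) (q : ℝ) (hq : q ∈ Set.Ioo (0 : ℝ) 1)
    (lam : ℝ) (hlam : 0 < lam)
    (T : Fin M → Ω → ℝ) (H : Ω → ℝ)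
    (hindep : iIndepFun (Fin.snoc T H : Fin (M + 1) → Ω → ℝ) μ)
    (hdist : ∀ i : Fin M,
      Measure.map (T i) μ = expMeasure (q * (1 - (i : ℝ) / M)))
    (hH : Measure.map H μ = expMeasure lam) :
    (μ {ω | ∑ i, T i ω < H ω}).toReal =
      Real.Gamma ((M : ℝ) + 1) * Real.Gamma (1 + M * lam / q) /
        Real.Gamma ((M : ℝ) + 1 + M * lam / q) := by
  classical
  obtain ⟨hq0, hq1⟩ := hq
  have hM0 : (0:ℝ) < M := by exact_mod_cast hM
  have hrate : ∀ i : Fin M, 0 < q * (1 - (i : ℝ) / M) := by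
    intro i
    have hiM : (i:ℝ) < M := by exact_mod_cast i.isLt
    have : (i:ℝ) / M < 1 := (div_lt_one hM0).2 hiM
    have : 0 < 1 - (i:ℝ)/M := by linarith
    exact mul_pos hq0 this
  -- a.e. measurability
  have hTae : ∀ i, AEMeasurable (T i) μ := by
    intro i
    by_contra hc
    have h0 := hdist i
    rw [Measure.map_of_not_aemeasurable hc] at h0
    haveI := isProbabilityMeasure_expMeasure (hrate i)
    have : (expMeasure (q * (1 - (i:ℝ)/M))) Set.univ = 1 := measure_univ
    rw [← h0] at this
    simp at this
  have hHae : AEMeasurable H μ := by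
    by_contra hc
    have h0 := hH
    rw [Measure.map_of_not_aemeasurable hc] at h0
    haveI := isProbabilityMeasure_expMeasure hlam
    have : (expMeasure lam) Set.univ = 1 := measure_univ
    rw [← h0] at this
    simp at this
  -- measurable modifications
  set T' : Fin M → Ω → ℝ := fun i => (hTae i).mk (T i) with hT'def
  set H' : Ω → ℝ := hHae.mk H with hH'def
  have hT'meas : ∀ i, Measurable (T' i) := fun i => (hTae i).measurable_mk
  have hH'meas : Measurable H' := hHae.measurable_mk
  have hT'eq : ∀ i, T i =ᵐ[μ] T' i := fun i => (hTae i).ae_eq_mk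
  have hH'eq : H =ᵐ[μ] H' := hHae.ae_eq_mk
  have hdist' : ∀ i, Measure.map (T' i) μ = expMeasure (q * (1 - (i:ℝ)/M)) := by
    intro i
    rw [← Measure.map_congr (hT'eq i)]
    exact hdist i
  have hH'dist : Measure.map H' μ = expMeasure lam := by
    rw [← Measure.map_congr hH'eq]; exact hH
  set X : Fin (M+1) → Ω → ℝ := Fin.snoc T' H' with hXdef
  have hsnoc_eq : ∀ j, (Fin.snoc T H : Fin (M+1) → Ω → ℝ) j =ᵐ[μ] X j := by
    intro j
    refine Fin.lastCases ?_ ?_ j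
    · simp only [hXdef, Fin.snoc_last]; exact hH'eq
    · intro i; simp only [hXdef, Fin.snoc_castSucc]; exact hT'eq i
  have hindep' : iIndepFun X μ := my_iIndepFun_ae_eq hindep hsnoc_eq
  have hXmeas : ∀ j, Measurable (X j) := by
    intro j
    refine Fin.lastCases ?_ ?_ j
    · simp only [hXdef, Fin.snoc_last]; exact hH'meas
    · intro i; simp only [hXdef, Fin.snoc_castSucc]; exact hT'meas i
  set S : Ω → ℝ := fun ω => ∑ i, T' i ω with hSdef
  have hSmeas : Measurable S := by
    apply Finset.measurable_sum
    exact fun i _ => hT'meas i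
  set sIdx : Finset (Fin (M+1)) := Finset.univ.image Fin.castSucc with hsIdx
  have hlast_not : Fin.last M ∉ sIdx := by
    rw [hsIdx]
    intro hmem
    obtain ⟨i, _, hi⟩ := Finset.mem_image.1 hmem
    exact (Fin.castSucc_lt_last i).ne hi
  have hsum_eq : (∑ j ∈ sIdx, X j) = S := by
    funext ω
    rw [Finset.sum_apply, hsIdx,
      Finset.sum_image (fun i _ j _ h => Fin.castSucc_injective M h)]
    exact Finset.sum_congr rfl fun i _ => by simp [hXdef, Fin.snoc_castSucc]
  -- independence of S and H'
  have hindepSH : IndepFun S H' μ := by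
    have h0 := hindep'.indepFun_finsetSum_of_notMem hXmeas hlast_not
    have hXlast : X (Fin.last M) = H' := by simp [hXdef, Fin.snoc_last]
    rwa [hXlast, hsum_eq] at h0
  -- reduce set to the measurable versions
  have hsetae : μ {ω | ∑ i, T i ω < H ω} = μ {ω | S ω < H' ω} := by
    apply measure_congr
    have hall : ∀ᵐ ω ∂μ, (∀ i, T i ω = T' i ω) ∧ H ω = H' ω :=
      ((ae_all_iff).2 hT'eq).and hH'eq
    filter_upwards [hall] with ω hω
    obtain ⟨h1, h2⟩ := hω
    show (ω ∈ {ω | ∑ i, T i ω < H ω}) = (ω ∈ {ω | S ω < H' ω})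
    simp only [Set.mem_setOf_eq, eq_iff_iff, hSdef]
    rw [h2, Finset.sum_congr rfl fun i _ => h1 i]
  -- distribution of the pair
  have hmapS_prod : μ.map (fun ω => (S ω, H' ω)) = (μ.map S).prod (μ.map H') :=
    (indepFun_iff_map_prod_eq_prod_map_map hSmeas.aemeasurable
      hH'meas.aemeasurable).1 hindepSH
  have hmeas_set : MeasurableSet {p : ℝ × ℝ | p.1 < p.2} :=
    measurableSet_lt measurable_fst measurable_snd
  have hstep : μ {ω | S ω < H' ω} = ∫⁻ t, expMeasure lam (Set.Ioi t) ∂(μ.map S) := by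
    have h1 : (μ.map (fun ω => (S ω, H' ω))) {p : ℝ × ℝ | p.1 < p.2}
        = μ {ω | S ω < H' ω} := by
      rw [Measure.map_apply (hSmeas.prodMk hH'meas) hmeas_set]
      rfl
    rw [← h1, hmapS_prod, Measure.prod_apply hmeas_set, hH'dist]
    rfl
  -- a.e. nonnegativity
  have hT'nonneg : ∀ i, ∀ᵐ ω ∂μ, 0 ≤ T' i ω := by
    intro i
    have h0 : μ (T' i ⁻¹' Set.Iio 0) = 0 := by
      rw [← Measure.map_apply (hT'meas i) measurableSet_Iio, hdist' i,
        my_expMeasure_Iio_zero]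
    rw [ae_iff]
    have : {ω | ¬ 0 ≤ T' i ω} = T' i ⁻¹' Set.Iio 0 := by
      ext ω; simp [not_le]
    rw [this]; exact h0
  have hSnonneg : ∀ᵐ ω ∂μ, 0 ≤ S ω := by
    filter_upwards [(ae_all_iff).2 hT'nonneg] with ω hω
    exact Finset.sum_nonneg fun i _ => hω i
  have hae_map : ∀ᵐ t ∂(μ.map S), 0 ≤ t :=
    (ae_map_iff hSmeas.aemeasurable (measurableSet_le measurable_const measurable_id)).2
      hSnonneg
  have hstep2 : ∫⁻ t, expMeasure lam (Set.Ioi t) ∂(μ.map S)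
      = ∫⁻ t, ENNReal.ofReal (Real.exp (-(lam * t))) ∂(μ.map S) := by
    apply lintegral_congr_ae
    filter_upwards [hae_map] with t ht
    rw [my_expMeasure_Ioi hlam ht]
  have hstep3 : ∫⁻ t, ENNReal.ofReal (Real.exp (-(lam * t))) ∂(μ.map S)
      = ∫⁻ ω, ENNReal.ofReal (Real.exp (-(lam * S ω))) ∂μ :=
    lintegral_map (by fun_prop) hSmeas
  have hmgf : (∫⁻ ω, ENNReal.ofReal (Real.exp (-(lam * S ω))) ∂μ).toReal
      = mgf S μ (-lam) := by
    rw [show mgf S μ (-lam) = ∫ ω, Real.exp (-(lam * S ω)) ∂μ by simp only [mgf, neg_mul],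
      integral_eq_lintegral_of_nonneg_ae
        (Filter.Eventually.of_forall fun ω => (Real.exp_pos _).le)
        (Measurable.aestronglyMeasurable (by fun_prop))]
  -- product of mgfs
  have hmgf_prod : mgf S μ (-lam)
      = ∏ i : Fin M, (q * (1 - (i:ℝ)/M)) / (q * (1 - (i:ℝ)/M) + lam) := by
    have hs := hindep'.mgf_sum hXmeas sIdx (t := -lam)
    rw [hsum_eq] at hs
    rw [hs, hsIdx, Finset.prod_image (fun i _ j _ h => Fin.castSucc_injective M h)]
    refine Finset.prod_congr rfl fun i _ => ?_
    have hXi : X (Fin.castSucc i) = T' i := by simp [hXdef, Fin.snoc_castSucc]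
    rw [hXi]
    exact my_mgf_expMeasure (hrate i) hlam (hT'meas i) (hdist' i)
  -- algebra
  set b : ℝ := M * lam / q with hbdef
  have hbpos : 0 < b := by positivity
  have hfactor : ∀ i : Fin M, (q * (1 - (i:ℝ)/M)) / (q * (1 - (i:ℝ)/M) + lam)
      = ((M:ℝ) - i) / ((M:ℝ) - i + b) := by
    intro i
    have hiM : (i:ℝ) < M := by exact_mod_cast i.isLt
    have hc : 0 < (M:ℝ) - i := by linarith
    have hden1 : q * (1 - (i:ℝ)/M) + lam ≠ 0 := by
      have := hrate i; linarith
    have hden2 : (M:ℝ) - i + b ≠ 0 := by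
      have := hbpos; linarith
    rw [hbdef, div_eq_div_iff hden1 (by rw [← hbdef]; exact hden2)]
    field_simp
  have hprod2 : (∏ i : Fin M, ((M:ℝ) - i) / ((M:ℝ) - i + b))
      = ∏ k ∈ Finset.range M, (((k:ℝ) + 1) / ((k:ℝ) + 1 + b)) := by
    rw [Fin.prod_univ_eq_prod_range (fun k => ((M:ℝ) - k) / ((M:ℝ) - k + b)) M,
      ← Finset.prod_range_reflect (fun k => (((k:ℝ) + 1) / ((k:ℝ) + 1 + b))) M]
    refine Finset.prod_congr rfl fun j hj => ?_
    have hjM : j < M := Finset.mem_range.1 hj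
    have hcast : ((M - 1 - j : ℕ) : ℝ) + 1 = (M:ℝ) - j := by
      have h1 : (M - 1 - j : ℕ) = M - (j + 1) := by omega
      rw [h1, Nat.cast_sub (by omega)]
      push_cast
      ring
    rw [hcast]
  rw [hsetae, hstep, hstep2, hstep3, hmgf, hmgf_prod,
    Finset.prod_congr rfl fun i _ => hfactor i, hprod2, my_gamma_prod b hbpos M]
end
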